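/- arXiv:2603.07235 — 2 statements merged into one kernel-verified Lean document; each statement's English description precedes it below -/
import Mathlib

section
/- Search Novelty Score satisfies the Blatant Duplicate Axiom: if R is a set of unionable tables for query Q with nscore(Q,R,𝔸) > 0, and R' = R ∪ {Q} with Q ∉ R (Q aligned to itself by the identity alignment), then nscore(Q,R',𝔸') < nscore(Q,R,𝔸). -/
noncomputable def novelty {α : Type*} [DecidableEq α] (β : ℝ) (v v' : Option α) : ℝ :=
  if v = v' then 0
  else if v.isSome ∧ v'.isSome then 1
  else β

noncomputable def tuple_nscore {α : Type*} [DecidableEq α] {n : ℕ} (β : Fin n → ℝ)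
    (t t' : Fin n → Option α) : ℝ :=
  (1 / (n : ℝ)) * ∑ i, novelty (β i) (t i) (t' i)

noncomputable def Ntup {τ : Type*} [DecidableEq τ] (score : τ → τ → ℝ)
    (T : Multiset τ) (t : τ) : ℝ :=
  sInf {x : ℝ | ∃ t' ∈ T.erase t, x = score t t'}

noncomputable def table_nscore {τ : Type*} [DecidableEq τ] (score : τ → τ → ℝ)
    (T : Multiset τ) : ℝ :=
  (1 / (Multiset.card T : ℝ)) * (T.map (Ntup score T)).sum

/-- Search novelty score: nscore(Q,R) = table_nscore of the bag union of Q with the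
(already aligned, query-schema) contributions of the result tables in R. -/
noncomputable def nscore {α : Type*} [DecidableEq α] {n : ℕ} (β : Fin n → ℝ)
    (Q : Multiset (Fin n → Option α)) (R : Multiset (Multiset (Fin n → Option α))) : ℝ :=
  table_nscore (tuple_nscore β) (Q + R.sum)
section aux
variable {α : Type*} [DecidableEq α] {n : ℕ}

lemma novelty_nonneg (b : ℝ) (hb : 0 ≤ b) (v v' : Option α) : 0 ≤ novelty b v v' := by
  unfold novelty
  split_ifs with h1 h2
  · norm_num
  · norm_num
  · exact hb

lemma tuple_nscore_nonneg (β : Fin n → ℝ) (hβ : ∀ i, 0 ≤ β i ∧ β i ≤ 1)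
    (t t' : Fin n → Option α) : 0 ≤ tuple_nscore β t t' := by
  unfold tuple_nscore
  apply mul_nonneg (by positivity)
  exact Finset.sum_nonneg fun i _ => novelty_nonneg _ (hβ i).1 _ _

lemma tuple_nscore_self (β : Fin n → ℝ) (t : Fin n → Option α) :
    tuple_nscore β t t = 0 := by
  unfold tuple_nscore novelty; simp

lemma Ntup_nonneg {τ : Type*} [DecidableEq τ] (score : τ → τ → ℝ)
    (hs : ∀ a b, 0 ≤ score a b) (T : Multiset τ) (t : τ) : 0 ≤ Ntup score T t :=
  Real.sInf_nonneg (by rintro x ⟨t', _, rfl⟩; exact hs _ _)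

lemma Ntup_eq_zero_of_dup {τ : Type*} [DecidableEq τ] (score : τ → τ → ℝ)
    (hs : ∀ a b, 0 ≤ score a b) (hself : ∀ a, score a a = 0)
    (T : Multiset τ) (t : τ) (h : t ∈ T.erase t) : Ntup score T t = 0 := by
  have h0 : (0:ℝ) ∈ {x : ℝ | ∃ t' ∈ T.erase t, x = score t t'} := ⟨t, h, (hself t).symm⟩
  have hb : BddBelow {x : ℝ | ∃ t' ∈ T.erase t, x = score t t'} :=
    ⟨0, by rintro x ⟨t', _, rfl⟩; exact hs _ _⟩
  exact le_antisymm (csInf_le hb h0) (Ntup_nonneg score hs T t)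

lemma Ntup_mono {τ : Type*} [DecidableEq τ] (score : τ → τ → ℝ)
    (hs : ∀ a b, 0 ≤ score a b) {T T' : Multiset τ} (hTT : T ≤ T') (t : τ)
    (hne : T.erase t ≠ 0) : Ntup score T' t ≤ Ntup score T t := by
  apply csInf_le_csInf
  · exact ⟨0, by rintro x ⟨t', _, rfl⟩; exact hs _ _⟩
  · obtain ⟨a, ha⟩ := Multiset.exists_mem_of_ne_zero hne
    exact ⟨score t a, a, ha, rfl⟩
  · rintro x ⟨t', ht', rfl⟩
    exact ⟨t', Multiset.mem_of_le (Multiset.erase_le_erase t hTT) ht', rfl⟩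

end aux

/-- Blatant Duplicate Axiom: if nscore(Q,R) > 0 and Q ∉ R, then adding
Q itself (aligned to itself by the identity alignment) to the result set strictly
decreases the search novelty score. -/
theorem blatant_duplicate_axiom {α : Type*} [DecidableEq α] {n : ℕ} (hn : 1 ≤ n)
    (β : Fin n → ℝ) (hβ : ∀ i, 0 ≤ β i ∧ β i ≤ 1)
    (Q : Multiset (Fin n → Option α)) (hQ : Q ≠ 0)
    (R : Multiset (Multiset (Fin n → Option α))) (hQR : Q ∉ R)
    (hpos : 0 < nscore β Q R) :
    nscore β Q (Q ::ₘ R) < nscore β Q R := by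
  classical
  set score := tuple_nscore (α := α) β with hscore
  have hs : ∀ a b, 0 ≤ score a b := fun a b => tuple_nscore_nonneg β hβ a b
  have hself : ∀ a, score a a = 0 := fun a => tuple_nscore_self β a
  set T : Multiset (Fin n → Option α) := Q + R.sum with hT
  set T' : Multiset (Fin n → Option α) := Q + T with hT'
  have hQT : Q ≤ T := Multiset.le_add_right _ _
  have hTT' : T ≤ T' := Multiset.le_add_left _ _
  have hnsR : nscore β Q R = (1 / (Multiset.card T : ℝ)) * (T.map (Ntup score T)).sum := rfl
  have hsum' : (Q ::ₘ R).sum = T := Multiset.sum_cons _ _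
  have hnsR' : nscore β Q (Q ::ₘ R) =
      (1 / (Multiset.card T' : ℝ)) * (T'.map (Ntup score T')).sum := by
    unfold nscore table_nscore
    rw [hsum']
  -- cardinalities
  have hQcard : 1 ≤ Multiset.card Q := Multiset.card_pos.mpr hQ
  have hTcard1 : 1 ≤ Multiset.card T := le_trans hQcard (Multiset.card_le_card hQT)
  -- S > 0
  set S : ℝ := (T.map (Ntup score T)).sum with hS
  have hSpos : 0 < S := by
    by_contra h
    push_neg at h
    have : nscore β Q R ≤ 0 := by
      rw [hnsR]
      apply mul_nonpos_of_nonneg_of_nonpos (by positivity) h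
    linarith
  -- card T ≥ 2
  have hTcard2 : 2 ≤ Multiset.card T := by
    by_contra h
    push_neg at h
    have hc : Multiset.card T = 1 := by omega
    obtain ⟨a, ha⟩ := Multiset.card_eq_one.mp hc
    have h1 : S = Ntup score T a := by rw [hS, ha]; simp
    have herase : T.erase a = 0 := by rw [ha]; simp
    have h2 : Ntup score T a = 0 := by
      unfold Ntup
      rw [herase]
      have he : {x : ℝ | ∃ t' ∈ (0 : Multiset (Fin n → Option α)), x = score a t'} = ∅ := by
        ext x; simp
      rw [he, Real.sInf_empty]
    linarith
  have herase_ne : ∀ t ∈ T, T.erase t ≠ 0 := by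
    intro t ht h0
    have := Multiset.card_erase_of_mem ht
    rw [h0] at this
    simp at this
    omega
  -- S' ≤ S
  have hmapsplit : (T'.map (Ntup score T')).sum
      = (Q.map (Ntup score T')).sum + (T.map (Ntup score T')).sum := by
    rw [hT', Multiset.map_add, Multiset.sum_add]
  have hQzero : (Q.map (Ntup score T')).sum = 0 := by
    apply Multiset.sum_eq_zero
    intro x hx
    obtain ⟨t, ht, rfl⟩ := Multiset.mem_map.mp hx
    apply Ntup_eq_zero_of_dup score hs hself
    have h1 : 1 ≤ Multiset.count t Q := Multiset.one_le_count_iff_mem.mpr ht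
    have h2 : Multiset.count t Q ≤ Multiset.count t T := Multiset.count_le_of_le t hQT
    have : 2 ≤ Multiset.count t T' := by
      rw [hT', Multiset.count_add]; omega
    rw [← Multiset.count_pos, Multiset.count_erase_self]
    omega
  have hTle : (T.map (Ntup score T')).sum ≤ (T.map (Ntup score T)).sum := by
    apply Multiset.sum_map_le_sum_map
    intro t ht
    exact Ntup_mono score hs hTT' t (herase_ne t ht)
  have hS'le : (T'.map (Ntup score T')).sum ≤ S := by
    rw [hmapsplit, hQzero, zero_add]; exact hTle
  -- final arithmetic
  have hcard' : Multiset.card T' = Multiset.card Q + Multiset.card T := by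
    rw [hT', Multiset.card_add]
  have hc : (0:ℝ) < (Multiset.card T : ℝ) := by exact_mod_cast lt_of_lt_of_le one_pos hTcard1
  have hcc' : (Multiset.card T : ℝ) < (Multiset.card T' : ℝ) := by
    have : Multiset.card T < Multiset.card T' := by omega
    exact_mod_cast this
  rw [hnsR, hnsR']
  calc (1 / (Multiset.card T' : ℝ)) * (T'.map (Ntup score T')).sum
      ≤ (1 / (Multiset.card T' : ℝ)) * S := by
        apply mul_le_mul_of_nonneg_left hS'le (by positivity)
    _ < (1 / (Multiset.card T : ℝ)) * S := by
        apply mul_lt_mul_of_pos_right _ hSpos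
        exact one_div_lt_one_div_of_lt hc hcc'
end

section
/- The greedy GMM algorithm for Max-Min diversification is a ½-approximation: for a finite metric space (U,δ), universe size k, and target size 2 ≤ l ≤ k, the set S returned by the greedy farthest-point procedure satisfies div(S) ≥ ½ · max_{S'⊆U, |S'|=l} div(S'), where div(S) = min_{s≠s'∈S} δ(s,s'). -/
/-- Minimum distance from a point u to a finite set S. -/
noncomputable def minDistTo {U : Type*} (δ : U → U → ℝ) (S : Finset U) (u : U) : ℝ :=
  sInf {d : ℝ | ∃ a ∈ S, d = δ a u}

/-- Max-Min diversity of a set: the minimum pairwise distance among its elements. -/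
noncomputable def divm {U : Type*} (δ : U → U → ℝ) (S : Finset U) : ℝ :=
  sInf {d : ℝ | ∃ a ∈ S, ∃ b ∈ S, a ≠ b ∧ d = δ a b}

section Aux

variable {U : Type*} {δ : U → U → ℝ}

lemma minDistTo_le (hn : ∀ a b, 0 ≤ δ a b) {S : Finset U} {a : U} (ha : a ∈ S) (u : U) :
    minDistTo δ S u ≤ δ a u := by
  apply csInf_le
  · exact ⟨0, by rintro d ⟨b, _, rfl⟩; exact hn b u⟩
  · exact ⟨a, ha, rfl⟩

lemma minDistTo_achieved {S : Finset U} (hS : S.Nonempty) (u : U) :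
    ∃ a ∈ S, minDistTo δ S u = δ a u := by
  have hne : {d : ℝ | ∃ a ∈ S, d = δ a u}.Nonempty := by
    obtain ⟨a, ha⟩ := hS; exact ⟨δ a u, a, ha, rfl⟩
  have hfin : {d : ℝ | ∃ a ∈ S, d = δ a u}.Finite := by
    have : {d : ℝ | ∃ a ∈ S, d = δ a u} = ↑(S.image (fun a => δ a u)) := by
      ext d; simp [eq_comm]
    rw [this]; exact (S.image _).finite_toSet
  exact hne.csInf_mem hfin

lemma divm_le (hn : ∀ a b, 0 ≤ δ a b) {S : Finset U} {a b : U}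
    (ha : a ∈ S) (hb : b ∈ S) (hab : a ≠ b) : divm δ S ≤ δ a b := by
  apply csInf_le
  · exact ⟨0, by rintro d ⟨c, _, e, _, _, rfl⟩; exact hn c e⟩
  · exact ⟨a, ha, b, hb, hab, rfl⟩

end Aux

/-- Ravi–Rosenkrantz–Tayi: on a finite metric space, the greedy
farthest-point (GMM) procedure — start anywhere, then at each step add an element
maximizing its minimum distance to the already-selected set — is a ½-approximation
for Max-Min diversification: div(S) ≥ ½ · max_{|S'| = l} div(S') for 2 ≤ l ≤ |U|. -/
theorem gmm_half_approximation {U : Type*} [Fintype U] [DecidableEq U]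
    (δ : U → U → ℝ)
    (hnonneg : ∀ a b, 0 ≤ δ a b) (hsymm : ∀ a b, δ a b = δ b a)
    (hself : ∀ a, δ a a = 0) (hsep : ∀ a b, δ a b = 0 → a = b)
    (htri : ∀ a b c, δ a c ≤ δ a b + δ b c)
    (l : ℕ) (hl : 2 ≤ l) (hlk : l ≤ Fintype.card U)
    (x : Fin l → U)
    (hgreedy : ∀ j : Fin l, ∀ u : U,
      minDistTo δ ((Finset.univ.filter (fun i : Fin l => i < j)).image x) u ≤
        minDistTo δ ((Finset.univ.filter (fun i : Fin l => i < j)).image x) (x j)) :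
    ∀ S' : Finset U, S'.card = l →
      divm δ S' ≤ 2 * divm δ (Finset.image x Finset.univ) := by
  intro S' hS'
  set G : Finset U := Finset.image x Finset.univ with hG
  -- prefix sets
  set Pj : Fin l → Finset U :=
    fun j => (Finset.univ.filter (fun i : Fin l => i < j)).image x with hPj
  have mem_Pj : ∀ {i j : Fin l}, i < j → x i ∈ Pj j := by
    intro i j hij
    exact Finset.mem_image.2 ⟨i, Finset.mem_filter.2 ⟨Finset.mem_univ i, hij⟩, rfl⟩
  have Pj_nonempty : ∀ {j : Fin l}, 0 < j.val → (Pj j).Nonempty := by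
    intro j hj
    exact ⟨x ⟨0, by omega⟩, mem_Pj (by simpa [Fin.lt_def] using hj)⟩
  set rj : Fin l → ℝ := fun j => minDistTo δ (Pj j) (x j) with hrj
  have last_lt : l - 1 < l := by omega
  set last : Fin l := ⟨l - 1, last_lt⟩ with hlast
  set r : ℝ := rj last with hr
  -- step 2: every point is within r of the last prefix
  have hnear : ∀ u : U, ∃ a ∈ Pj last, δ a u ≤ r := by
    intro u
    obtain ⟨a, ha, he⟩ := minDistTo_achieved (δ := δ) (Pj_nonempty (j := last) (show 0 < l - 1 by omega)) u
    exact ⟨a, ha, by rw [← he]; exact hgreedy last u⟩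
  choose f hfP hfr using hnear
  -- pigeonhole
  have hcard : (Pj last).card < S'.card := by
    have h1 : (Pj last).card ≤ (Finset.univ.filter (fun i : Fin l => i < last)).card :=
      Finset.card_image_le
    have h2 : (Finset.univ.filter (fun i : Fin l => i < last)).card < l := by
      have hsub : (Finset.univ.filter (fun i : Fin l => i < last)) ⊂ Finset.univ := by
        rw [Finset.ssubset_univ_iff]
        intro h
        have := h ▸ Finset.mem_univ last
        simp at this
      have := Finset.card_lt_card hsub
      simpa using this
    omega
  obtain ⟨s, hs, s', hs', hss, hfe⟩ :=
    Finset.exists_ne_map_eq_of_card_lt_of_maps_to hcard (fun a ha => hfP a)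
  -- divm S' ≤ 2 r
  have h2r : divm δ S' ≤ 2 * r := by
    have h1 : divm δ S' ≤ δ s s' := divm_le hnonneg hs hs' hss
    have h2 : δ s s' ≤ δ s (f s) + δ (f s) s' := htri s (f s) s'
    have h3 : δ s (f s) ≤ r := by rw [hsymm]; exact hfr s
    have h4 : δ (f s) s' ≤ r := by rw [hfe]; exact hfr s'
    linarith
  -- monotonicity step
  have step : ∀ (n : ℕ) (h1 : 0 < n) (h2 : n + 1 < l),
      rj ⟨n + 1, h2⟩ ≤ rj ⟨n, by omega⟩ := by
    intro n h1 h2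
    have hne : (Pj ⟨n, by omega⟩).Nonempty := Pj_nonempty h1
    obtain ⟨a, ha, he⟩ := minDistTo_achieved (δ := δ) hne (x ⟨n + 1, h2⟩)
    have ha' : a ∈ Pj ⟨n + 1, h2⟩ := by
      obtain ⟨i, hi, rfl⟩ := Finset.mem_image.1 ha
      have := Finset.mem_filter.1 hi
      exact mem_Pj (by simp [Fin.lt_def] at this ⊢; omega)
    calc rj ⟨n + 1, h2⟩ ≤ δ a (x ⟨n + 1, h2⟩) := minDistTo_le hnonneg ha' _
      _ = minDistTo δ (Pj ⟨n, by omega⟩) (x ⟨n + 1, h2⟩) := he.symm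
      _ ≤ rj ⟨n, by omega⟩ := hgreedy ⟨n, by omega⟩ (x ⟨n + 1, h2⟩)
  -- monotonicity
  have mono : ∀ (n n' : ℕ) (h : n < l) (h' : n' < l), 0 < n → n ≤ n' →
      rj ⟨n', h'⟩ ≤ rj ⟨n, h⟩ := by
    intro n n'
    induction n' with
    | zero => intro h h' h0 hle; omega
    | succ m ih =>
      intro h h' h0 hle
      rcases Nat.lt_or_ge n (m + 1) with hlt | hge
      · have hm : m < l := by omega
        calc rj ⟨m + 1, h'⟩ ≤ rj ⟨m, hm⟩ := step m (by omega) h'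
          _ ≤ rj ⟨n, h⟩ := ih h hm h0 (by omega)
      · have : n = m + 1 := by omega
        subst this
        exact le_refl _
  have key : ∀ i j : Fin l, i < j → r ≤ δ (x i) (x j) := by
    intro i j hij
    have hj0 : 0 < j.val := by
      have := hij; rw [Fin.lt_def] at this; omega
    have h1 : r ≤ rj j := by
      have := mono j.val (l - 1) j.isLt last_lt hj0 (by omega)
      simpa [hr, hlast] using this
    have h2 : rj j ≤ δ (x i) (x j) := minDistTo_le hnonneg (mem_Pj hij) _
    linarith
  -- r ≤ divm G
  have hrdiv : r ≤ divm δ G := by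
    by_cases hc : ∃ i j : Fin l, x i ≠ x j
    · apply le_csInf
      · obtain ⟨i, j, hij⟩ := hc
        exact ⟨δ (x i) (x j), x i, Finset.mem_image_of_mem x (Finset.mem_univ i),
          x j, Finset.mem_image_of_mem x (Finset.mem_univ j), hij, rfl⟩
      · rintro d ⟨a, ha, b, hb, hab, rfl⟩
        obtain ⟨i, -, rfl⟩ := Finset.mem_image.1 ha
        obtain ⟨j, -, rfl⟩ := Finset.mem_image.1 hb
        rcases lt_trichotomy i j with h | h | h
        · exact key i j h
        · exact absurd (congrArg x h) hab
        · rw [hsymm]; exact key j i h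
    · push_neg at hc
      have hdiv : divm δ G = 0 := by
        have hempty : {d : ℝ | ∃ a ∈ G, ∃ b ∈ G, a ≠ b ∧ d = δ a b} = ∅ := by
          ext d
          simp only [Set.mem_setOf_eq, Set.mem_empty_iff_false, iff_false]
          rintro ⟨a, ha, b, hb, hab, rfl⟩
          obtain ⟨i, -, rfl⟩ := Finset.mem_image.1 ha
          obtain ⟨j, -, rfl⟩ := Finset.mem_image.1 hb
          exact hab (hc i j)
        rw [divm, hempty, Real.sInf_empty]
      have hr0 : r ≤ 0 := by
        have h0 : (⟨0, by omega⟩ : Fin l) < last := by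
          rw [Fin.lt_def]; simp [hlast]; omega
        have h1 : r ≤ δ (x ⟨0, by omega⟩) (x last) := minDistTo_le hnonneg (mem_Pj h0) _
        rw [hc ⟨0, by omega⟩ last, hself] at h1
        exact h1
      linarith
  linarith
end
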